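/- arXiv:1509.06009 — 3 statements merged into one kernel-verified Lean document; each statement's English description precedes it below -/
import Mathlib

section
/- No Fano plane on {1,2,3,4,5,6,7} has all 7 of its lines ordinary; equivalently, every Fano plane on {1,...,7} contains at least one defective line. -/
/-- The point set {1,...,7}. -/
def pts : Finset ℕ := Finset.Icc 1 7

/-- All three-element subsets of {1,...,7}, the candidate lines. -/
def lines : Finset (Finset ℕ) := pts.powersetCard 3

/-- A line {a,b,c} with a < b < c is ordinary if a + b = c. -/
def Ordinary (l : Finset ℕ) : Prop :=
  ∃ a ∈ l, ∃ b ∈ l, ∃ c ∈ l, a < b ∧ b < c ∧ a + b = c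

instance : DecidablePred Ordinary := fun l => by unfold Ordinary; infer_instance

/-- A line is defective if it is not ordinary. -/
def Defective (l : Finset ℕ) : Prop := ¬ Ordinary l

instance : DecidablePred Defective := fun l => by unfold Defective; infer_instance

/-- A Fano plane on {1,...,7}: seven 3-element subsets such that every pair of
distinct points lies on exactly one line. -/
def IsFano (F : Finset (Finset ℕ)) : Prop :=
  F ⊆ lines ∧ F.card = 7 ∧
    ∀ p ∈ pts, ∀ q ∈ pts, p ≠ q →
      (F.filter (fun l => p ∈ l ∧ q ∈ l)).card = 1

instance : DecidablePred IsFano := fun F => by unfold IsFano; infer_instance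

/-- The collection of all Fano planes on {1,...,7}. -/
def fanos : Finset (Finset (Finset ℕ)) := (lines.powersetCard 7).filter IsFano

/-- The order of a point p in a plane F: the number of defective lines of F through p. -/
def order (F : Finset (Finset ℕ)) (p : ℕ) : ℕ :=
  (F.filter (fun l => Defective l ∧ p ∈ l)).card

/-- The number of points of order s in the plane F. -/
def nOrd (F : Finset (Finset ℕ)) (s : ℕ) : ℕ :=
  (pts.filter (fun p => order F p = s)).card

theorem fano_has_defective_line : ∀ F : Finset (Finset ℕ), IsFano F →
    ∃ l ∈ F, Defective l := by
  intro F hF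
  by_contra h
  push_neg at h
  simp only [Defective, not_not] at h
  have hsub : F ⊆ lines.filter Ordinary := fun l hl =>
    Finset.mem_filter.mpr ⟨hF.1 hl, h l hl⟩
  have hmem : F ∈ (lines.filter Ordinary).powersetCard 7 :=
    Finset.mem_powersetCard.mpr ⟨hsub, hF.2.1⟩
  have : ∀ G ∈ (lines.filter Ordinary).powersetCard 7, ¬ IsFano G := by decide
  exact this F hmem hF
end

section
/- For every Fano plane on {1,2,3,4,5,6,7}, the number of ordinary lines it contains belongs to the set {0, 1, 2, 3, 4, 6}; in particular it is never 5 or 7. -/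
def ordLines : Finset (Finset ℕ) := lines.filter Ordinary
def defLines : Finset (Finset ℕ) := lines.filter Defective

def okA (A : Finset (Finset ℕ)) : Prop :=
  ∀ p ∈ pts, ∀ q ∈ pts, p < q → ((A.filter (fun l => p ∈ l ∧ q ∈ l)).card ≤ 1)

instance : DecidablePred okA := fun A => by unfold okA; infer_instance

def compat (A : Finset (Finset ℕ)) (b : Finset ℕ) : Prop :=
  ∀ p ∈ b, ∀ q ∈ b, p < q → ((A.filter (fun l => p ∈ l ∧ q ∈ l)).card = 0)

instance (A : Finset (Finset ℕ)) : DecidablePred (compat A) := fun b => by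
  unfold compat; infer_instance

set_option maxRecDepth 1000000 in
lemma no7 : ∀ F ∈ ordLines.powersetCard 7, ¬ IsFano F := by decide

set_option maxRecDepth 1000000 in
set_option maxHeartbeats 4000000 in
lemma key5 : ∀ A ∈ ordLines.powersetCard 5, okA A →
    (defLines.filter (compat A)).card ≤ 1 := by decide

lemma filter_ord_subset (F : Finset (Finset ℕ)) (hF : F ⊆ lines) :
    F.filter Ordinary ⊆ ordLines := by
  intro x hx
  rw [Finset.mem_filter] at hx
  exact Finset.mem_filter.2 ⟨hF hx.1, hx.2⟩

theorem ordinary_count_values : ∀ F : Finset (Finset ℕ), IsFano F →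
    (F.filter Ordinary).card ∈ ({0, 1, 2, 3, 4, 6} : Finset ℕ) := by
  intro F hFano
  obtain ⟨hsub, hcard, hpairs⟩ := hFano
  set A := F.filter Ordinary with hA
  set B := F.filter Defective with hB
  have hBalt : B = F.filter (fun l => ¬ Ordinary l) := by
    apply Finset.filter_congr; intro x _; rfl
  have hAB : A.card + B.card = 7 := by
    rw [hA, hBalt, ← hcard]
    exact Finset.card_filter_add_card_filter_not (fun l => Ordinary l)
  have hAle : A.card ≤ 7 := by omega
  -- not 7
  have h7 : A.card ≠ 7 := by
    intro h7
    have hAF : A = F := Finset.eq_of_subset_of_card_le (Finset.filter_subset _ _)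
      (by rw [hcard, h7])
    have : F ∈ ordLines.powersetCard 7 := Finset.mem_powersetCard.2
      ⟨by rw [← hAF]; exact filter_ord_subset F hsub, hcard⟩
    exact no7 F this ⟨hsub, hcard, hpairs⟩
  -- not 5
  have h5 : A.card ≠ 5 := by
    intro h5
    have hBcard : B.card = 2 := by omega
    have hAmem : A ∈ ordLines.powersetCard 5 :=
      Finset.mem_powersetCard.2 ⟨filter_ord_subset F hsub, h5⟩
    -- okA A
    have hok : okA A := by
      intro p hp q hq hpq
      calc (A.filter (fun l => p ∈ l ∧ q ∈ l)).card
          ≤ (F.filter (fun l => p ∈ l ∧ q ∈ l)).card :=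
            Finset.card_le_card (Finset.filter_subset_filter _ (Finset.filter_subset _ _))
        _ = 1 := hpairs p hp q hq (Nat.ne_of_lt hpq)
    -- every b ∈ B is compatible with A
    have hcomp : ∀ b ∈ B, compat A b := by
      intro b hb
      have hbF : b ∈ F := (Finset.filter_subset _ _) hb
      have hbdef : Defective b := (Finset.mem_filter.1 hb).2
      have hbA : b ∉ A := by
        intro hbA
        exact hbdef (Finset.mem_filter.1 hbA).2
      have hbl : b ∈ pts.powersetCard 3 := hsub hbF
      have hbpts : b ⊆ pts := (Finset.mem_powersetCard.1 hbl).1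
      intro p hp q hq hpq
      have h1 : (F.filter (fun l => p ∈ l ∧ q ∈ l)).card = 1 :=
        hpairs p (hbpts hp) q (hbpts hq) (Nat.ne_of_lt hpq)
      obtain ⟨c, hc⟩ := Finset.card_eq_one.1 h1
      have hbc : b = c := by
        have : b ∈ F.filter (fun l => p ∈ l ∧ q ∈ l) :=
          Finset.mem_filter.2 ⟨hbF, hp, hq⟩
        rw [hc] at this
        exact Finset.mem_singleton.1 this
      have hsubA : A.filter (fun l => p ∈ l ∧ q ∈ l) ⊆ {c} := by
        rw [← hc]
        exact Finset.filter_subset_filter _ (Finset.filter_subset _ _)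
      rw [Finset.card_eq_zero]
      rcases Finset.subset_singleton_iff.1 hsubA with h | h
      · exact h
      · exfalso
        have : b ∈ A.filter (fun l => p ∈ l ∧ q ∈ l) := by
          rw [h, hbc]; exact Finset.mem_singleton_self c
        exact hbA ((Finset.filter_subset _ _) this)
    -- B injects into the compatible defective lines
    have hBsub : B ⊆ defLines.filter (compat A) := by
      intro b hb
      exact Finset.mem_filter.2 ⟨Finset.mem_filter.2 ⟨hsub ((Finset.filter_subset _ _) hb),
        (Finset.mem_filter.1 hb).2⟩, hcomp b hb⟩
    have := Finset.card_le_card hBsub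
    have := key5 A hAmem hok
    omega
  -- conclude
  simp only [Finset.mem_insert, Finset.mem_singleton]
  omega
end

section
/- No Fano plane on {1,2,3,4,5,6,7} has all seven of its points of order 0. -/
lemma key : ∀ l ∈ lines, 3 ∈ l → 6 ∈ l → Defective l := by decide

theorem not_all_order_zero : ∀ F : Finset (Finset ℕ), IsFano F →
    ∃ p ∈ pts, order F p ≠ 0 := by
  intro F hF
  have h := hF.2.2 3 (by decide) 6 (by decide) (by decide)
  obtain ⟨l, hl⟩ := Finset.card_eq_one.mp h
  have hlmem : l ∈ F.filter (fun l => 3 ∈ l ∧ 6 ∈ l) := by rw [hl]; exact Finset.mem_singleton_self l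
  rw [Finset.mem_filter] at hlmem
  obtain ⟨hlF, h3, h6⟩ := hlmem
  have hdef : Defective l := key l (hF.1 hlF) h3 h6
  refine ⟨3, by decide, ?_⟩
  unfold order
  intro hzero
  have := Finset.card_eq_zero.mp hzero
  have : l ∈ (∅ : Finset (Finset ℕ)) := by
    rw [← this]; exact Finset.mem_filter.mpr ⟨hlF, hdef, h3⟩
  exact absurd this (Finset.notMem_empty l)
end
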